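/- Define the matching relation on a word over a visibly pushdown alphabet via a stack semantics: process the word left to right, pushing each call position onto a stack and, on each return position, popping the top call position (if any) and declaring the pair matched. Then this relation satisfies the three axioms of a matching relation: (i) matched pairs (i,j) satisfy i < j; (ii) for any call position i and return position j with i < j, some l with i ≤ l ≤ j satisfies i ~ l or l ~ j; (iii) every position participates in at most one matched pair. -/

import Mathlib

inductive SymKind : Type
  | call | ret | intern
deriving DecidableEq

def CallPos {σ : Type*} (kind : σ → SymKind) (w : List σ) (i : ℕ) : Prop :=
  ∃ a, w[i]? = some a ∧ kind a = SymKind.call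

def RetPos {σ : Type*} (kind : σ → SymKind) (w : List σ) (j : ℕ) : Prop :=
  ∃ a, w[j]? = some a ∧ kind a = SymKind.ret

/-- Left-to-right scan computing the matched call–return pairs: `i` is the
position of the first letter of the remaining word, `st` is the stack of
pending call positions. -/
def mpairs {σ : Type*} (kind : σ → SymKind) :
    List σ → ℕ → List ℕ → List (ℕ × ℕ)
  | [], _, _ => []
  | a :: rest, i, st =>
    match kind a with
    | SymKind.call => mpairs kind rest (i + 1) (i :: st)
    | SymKind.ret =>
      match st with
      | [] => mpairs kind rest (i + 1) []
      | c :: st' => (c, i) :: mpairs kind rest (i + 1) st'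
    | SymKind.intern => mpairs kind rest (i + 1) st

/-- The stack-semantics matching relation on the positions of `w`. -/
def StackMatch {σ : Type*} (kind : σ → SymKind) (w : List σ) (i j : ℕ) : Prop :=
  (i, j) ∈ mpairs kind w 0 []

/-!
The scan keeps its stack strictly decreasing and below the current position. Hence every
popped pair is a call followed by a later return, a return pops at most one call, and a popped
call never returns to the stack: this gives (i) and (iii). For (ii), either the call `i` is
popped by some `l ≤ j`, or it is still on the stack when the return `j` is read; then the
stack is nonempty and `j` pops its top `l`, which lies between `i` and `j`.
-/

theorem List.getElem?_eq_and_drop_succ_of_drop_eq_cons {α : Type*} {l u : List α} {a : α}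
    {i : ℕ} (h : l.drop i = a :: u) : l[i]? = some a ∧ l.drop (i + 1) = u := by
  refine ⟨?_, ?_⟩
  · rw [← Nat.add_zero i, ← List.getElem?_drop, h]; rfl
  · rw [← List.tail_drop, h]; rfl

theorem List.pairwise_gt_succ_cons_of_sublist {i : ℕ} {st st' : List ℕ}
    (h : (i :: st).Pairwise (· > ·)) (hs : st'.Sublist (i :: st)) :
    ((i + 1) :: st').Pairwise (· > ·) :=
  have hpush : ((i + 1) :: i :: st).Pairwise (· > ·) :=
    h.cons fun _ hx => (List.mem_cons.1 hx).elim (fun e => e ▸ i.lt_succ_self)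
      fun hx => (List.rel_of_pairwise_cons h hx).trans i.lt_succ_self
  hpush.sublist (hs.cons_cons _)

section Scan

variable {σ : Type*} {kind : σ → SymKind} {w : List σ}

theorem CallPos.kind_eq {i : ℕ} {a : σ} (h : CallPos kind w i) (ha : w[i]? = some a) :
    kind a = .call := by
  obtain ⟨b, hb, hk⟩ := h
  rwa [Option.some_inj.1 (ha.symm.trans hb)]

theorem RetPos.kind_eq {j : ℕ} {a : σ} (h : RetPos kind w j) (ha : w[j]? = some a) :
    kind a = .ret := by
  obtain ⟨b, hb, hk⟩ := h
  rwa [Option.some_inj.1 (ha.symm.trans hb)]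

theorem CallPos.not_retPos {i : ℕ} (h : CallPos kind w i) : ¬ RetPos kind w i := by
  rintro ⟨a, ha, hk⟩
  rw [h.kind_eq ha] at hk
  cases hk

theorem mem_mpairs_drop {i : ℕ} {st : List ℕ} {p : ℕ × ℕ} (hst : (i :: st).Pairwise (· > ·))
    (hp : p ∈ mpairs kind (w.drop i) i st) :
    (p.1 ∈ st ∨ i ≤ p.1 ∧ CallPos kind w p.1) ∧ p.1 < p.2 ∧ i ≤ p.2 ∧ RetPos kind w p.2 := by
  generalize hu : w.drop i = u at hp
  induction u generalizing i st with
  | nil => simp [mpairs] at hp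
  | cons a u ih =>
    obtain ⟨ha, hu⟩ := List.getElem?_eq_and_drop_succ_of_drop_eq_cons hu
    cases hk : kind a with
    | call =>
      simp only [mpairs, hk] at hp
      obtain ⟨hfst, hlt, hle, hret⟩ :=
        ih (List.pairwise_gt_succ_cons_of_sublist hst (.refl _)) hu hp
      refine ⟨?_, hlt, by omega, hret⟩
      rw [List.mem_cons] at hfst
      rcases hfst with (rfl | hfst) | ⟨hfst, hcall⟩
      · exact .inr ⟨le_rfl, a, ha, hk⟩
      · exact .inl hfst
      · exact .inr ⟨by omega, hcall⟩
    | intern =>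
      simp only [mpairs, hk] at hp
      obtain ⟨hfst, hlt, hle, hret⟩ :=
        ih (List.pairwise_gt_succ_cons_of_sublist hst (List.sublist_cons_self _ _)) hu hp
      exact ⟨hfst.imp_right fun h => ⟨by omega, h.2⟩, hlt, by omega, hret⟩
    | ret =>
      cases st with
      | nil =>
        simp only [mpairs, hk] at hp
        obtain ⟨hfst, hlt, hle, hret⟩ := ih (List.pairwise_singleton _ _) hu hp
        exact ⟨hfst.imp_right fun h => ⟨by omega, h.2⟩, hlt, by omega, hret⟩
      | cons d st =>
        simp only [mpairs, hk, List.mem_cons] at hp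
        rcases hp with rfl | hp
        · exact ⟨.inl (List.mem_cons_self ..),
            List.rel_of_pairwise_cons hst (List.mem_cons_self ..), le_rfl, a, ha, hk⟩
        obtain ⟨hfst, hlt, hle, hret⟩ := ih (List.pairwise_gt_succ_cons_of_sublist hst
          ((List.sublist_cons_self _ _).cons _)) hu hp
        exact ⟨(hfst.imp_left (List.mem_cons_of_mem d)).imp_right fun h => ⟨by omega, h.2⟩,
          hlt, by omega, hret⟩

theorem pairwise_mpairs_drop {i : ℕ} {st : List ℕ} (hst : (i :: st).Pairwise (· > ·)) :
    (mpairs kind (w.drop i) i st).Pairwise fun p q => p.1 ≠ q.1 ∧ p.2 ≠ q.2 := by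
  generalize hu : w.drop i = u
  induction u generalizing i st with
  | nil => exact .nil
  | cons a u ih =>
    obtain ⟨-, hu⟩ := List.getElem?_eq_and_drop_succ_of_drop_eq_cons hu
    cases hk : kind a with
    | call =>
      simpa only [mpairs, hk] using ih (List.pairwise_gt_succ_cons_of_sublist hst (.refl _)) hu
    | intern =>
      simpa only [mpairs, hk] using
        ih (List.pairwise_gt_succ_cons_of_sublist hst (List.sublist_cons_self _ _)) hu
    | ret =>
      cases st with
      | nil => simpa only [mpairs, hk] using ih (List.pairwise_singleton _ _) hu
      | cons d st =>
        have hst' := List.pairwise_gt_succ_cons_of_sublist hst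
          ((List.sublist_cons_self _ _).cons _)
        simp only [mpairs, hk]
        refine List.Pairwise.cons (fun q hq => ?_) (ih hst' hu)
        have hd : ∀ x ∈ st, d > x :=
          fun _ => List.rel_of_pairwise_cons (List.pairwise_cons.1 hst).2
        have hdi : i > d := List.rel_of_pairwise_cons hst (List.mem_cons_self ..)
        obtain ⟨hfst, -, hle, -⟩ := mem_mpairs_drop hst' (hu ▸ hq)
        refine ⟨?_, by omega⟩
        rintro rfl
        rcases hfst with hfst | ⟨hfst, -⟩
        · exact lt_irrefl _ (hd _ hfst)
        · omega

theorem eq_of_mem_mpairs_drop {i : ℕ} {st : List ℕ} {p q : ℕ × ℕ}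
    (hst : (i :: st).Pairwise (· > ·)) (hp : p ∈ mpairs kind (w.drop i) i st)
    (hq : q ∈ mpairs kind (w.drop i) i st) (h : p.1 = q.1 ∨ p.2 = q.2) : p = q := by
  by_contra hne
  have : Std.Symm fun p q : ℕ × ℕ => p.1 ≠ q.1 ∧ p.2 ≠ q.2 := ⟨fun _ _ h => ⟨h.1.symm, h.2.symm⟩⟩
  have := (pairwise_mpairs_drop hst).forall hp hq hne
  tauto

theorem exists_ge_mem_mpairs_cons_of_ret {a : σ} {u : List σ} {i c : ℕ} {st : List ℕ}
    (hst : (i :: st).Pairwise (· > ·)) (hc : c ∈ st) (hk : kind a = .ret) :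
    ∃ d, c ≤ d ∧ d < i ∧ (d, i) ∈ mpairs kind (a :: u) i st := by
  obtain ⟨d, st, rfl⟩ := List.exists_cons_of_ne_nil (List.ne_nil_of_mem hc)
  refine ⟨d, ?_, List.rel_of_pairwise_cons hst (List.mem_cons_self ..), by simp [mpairs, hk]⟩
  rcases List.mem_cons.1 hc with rfl | hc
  · exact le_rfl
  · exact (List.rel_of_pairwise_cons (List.pairwise_cons.1 hst).2 hc).le

theorem exists_mem_mpairs_drop_between {i j c : ℕ} {st : List ℕ}
    (hst : (i :: st).Pairwise (· > ·)) (hc : c ∈ st ∨ i ≤ c ∧ CallPos kind w c) (hcj : c < j)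
    (hij : i ≤ j) (hj : RetPos kind w j) :
    ∃ l, c ≤ l ∧ l ≤ j ∧
      ((c, l) ∈ mpairs kind (w.drop i) i st ∨ (l, j) ∈ mpairs kind (w.drop i) i st) := by
  generalize hu : w.drop i = u
  induction u generalizing i st with
  | nil =>
    obtain ⟨a, ha, -⟩ := hj
    rw [List.drop_eq_nil_iff] at hu
    simp [List.getElem?_eq_none (hu.trans hij)] at ha
  | cons a u ih =>
    obtain ⟨ha, hu⟩ := List.getElem?_eq_and_drop_succ_of_drop_eq_cons hu
    have hlt : ∀ x ∈ st, i > x := fun _ => List.rel_of_pairwise_cons hst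
    have hshift : kind a ≠ .call → i ≤ c ∧ CallPos kind w c → i + 1 ≤ c ∧ CallPos kind w c :=
      fun hk ⟨hic, hc⟩ => ⟨Nat.lt_of_le_of_ne hic fun e => hk (hc.kind_eq (e ▸ ha)), hc⟩
    rcases hij.eq_or_lt with rfl | hij
    · obtain ⟨d, hcd, hdi, hd⟩ :=
        exists_ge_mem_mpairs_cons_of_ret hst (hc.resolve_right (by omega)) (hj.kind_eq ha)
      exact ⟨d, hcd, hdi.le, .inr hd⟩
    cases hk : kind a with
    | call =>
      have hc' : c ∈ i :: st ∨ i + 1 ≤ c ∧ CallPos kind w c := by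
        rcases hc with hc | ⟨hic, hc⟩ <;> grind
      simpa only [mpairs, hk] using
        ih (List.pairwise_gt_succ_cons_of_sublist hst (.refl _)) hc' hij hu
    | intern =>
      simpa only [mpairs, hk] using
        ih (List.pairwise_gt_succ_cons_of_sublist hst (List.sublist_cons_self _ _))
          (hc.imp_right (hshift (by simp [hk]))) hij hu
    | ret =>
      cases st with
      | nil =>
        simpa only [mpairs, hk] using ih (List.pairwise_singleton _ _)
          (hc.imp_right (hshift (by simp [hk]))) hij hu
      | cons d st =>
        simp only [mpairs, hk, List.mem_cons, Prod.mk.injEq]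
        by_cases hcd : c = d
        · exact ⟨i, (hlt c (hcd ▸ List.mem_cons_self ..)).le, hij.le, .inl (.inl ⟨hcd, rfl⟩)⟩
        have hc' : c ∈ st ∨ i + 1 ≤ c ∧ CallPos kind w c :=
          (hc.imp_left fun hc => (List.mem_cons.1 hc).resolve_left hcd).imp_right
            (hshift (by simp [hk]))
        obtain ⟨l, hcl, hlj, h⟩ := ih (List.pairwise_gt_succ_cons_of_sublist hst
          ((List.sublist_cons_self _ _).cons _)) hc' hij hu
        exact ⟨l, hcl, hlj, h.imp .inr .inr⟩

end Scan

/-- The stack-based matching relation satisfies the three axioms of a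
matching relation. -/
theorem stackMatch_is_matching {σ : Type*} (kind : σ → SymKind) (w : List σ) :
    -- (i) matched pairs are ordered
    (∀ i j, StackMatch kind w i j → i < j) ∧
    -- (ii) between any call `i` and later return `j` some `l` matches `i` or `j`
    (∀ i j, CallPos kind w i → RetPos kind w j → i < j →
      ∃ l, i ≤ l ∧ l ≤ j ∧ (StackMatch kind w i l ∨ StackMatch kind w l j)) ∧
    -- (iii) every position participates in at most one matched pair
    (∀ i j i' j', StackMatch kind w i j → StackMatch kind w i' j' →
      (i = i' ∨ i = j' ∨ j = i' ∨ j = j') → i = i' ∧ j = j') := by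
  have hst : [0].Pairwise (· > ·) := List.pairwise_singleton _ _
  have hpos {i j : ℕ} (h : StackMatch kind w i j) :
      CallPos kind w i ∧ i < j ∧ RetPos kind w j := by
    obtain ⟨hi, hij, -, hj⟩ := mem_mpairs_drop (w := w) hst h
    exact ⟨(hi.resolve_left List.not_mem_nil).2, hij, hj⟩
  refine ⟨fun i j h => (hpos h).2.1, fun i j hi hj hij => ?_, fun i j i' j' h h' hij => ?_⟩
  · exact exists_mem_mpairs_drop_between hst (.inr ⟨Nat.zero_le _, hi⟩) hij (Nat.zero_le _) hj
  · have heq := fun h₁ => Prod.mk.inj (eq_of_mem_mpairs_drop (w := w) hst h h' h₁)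
    rcases hij with e | e | e | e
    · exact heq (.inl e)
    · exact absurd (e ▸ (hpos h').2.2) (hpos h).1.not_retPos
    · exact absurd (e ▸ (hpos h).2.2) (hpos h').1.not_retPos
    · exact heq (.inr e)
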